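/- Let c and d be extreme cycles in a graph E. Then c ∼ d (i.e., d^0 meets the tree of c^0) if and only if T(c^0) = T(d^0). Consequently, if c and d are not equivalent then \tilde{c}^0 ∩ \tilde{d}^0 = ∅. -/

import Mathlib

/-- A directed graph. -/
structure DGraph (V E : Type) where
  s : E → V
  r : E → V

namespace DGraph

variable {V E : Type}

/-- Paths in a directed graph. -/
inductive GPath (G : DGraph V E) : V → V → Type
  | nil (v : V) : GPath G v v
  | cons (e : E) {w : V} (p : GPath G (G.r e) w) : GPath G (G.s e) w

namespace GPath

variable {G : DGraph V E}

/-- The length of a path. -/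
def length : ∀ {u v : V}, GPath G u v → ℕ
  | _, _, .nil _ => 0
  | _, _, .cons _ p => p.length + 1

/-- The list of edges of a path. -/
def edges : ∀ {u v : V}, GPath G u v → List E
  | _, _, .nil _ => []
  | _, _, .cons e p => e :: p.edges

/-- The list of vertices of a path. -/
def vertices : ∀ {u v : V}, GPath G u v → List V
  | _, _, .nil w => [w]
  | _, _, .cons e p => G.s e :: p.vertices

end GPath

variable (G : DGraph V E)

/-- `u` connects to `v` (there is a path from `u` to `v`). -/
def Reach (u v : V) : Prop := Nonempty (G.GPath u v)

/-- A subset of vertices is hereditary if it is closed under ranges of paths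
starting in it. -/
def Hereditary (H : Set V) : Prop := ∀ ⦃u v : V⦄, G.Reach u v → u ∈ H → v ∈ H

/-- A regular vertex: it emits a finite nonzero number of edges. -/
def Regular (v : V) : Prop := {e : E | G.s e = v}.Finite ∧ ∃ e : E, G.s e = v

/-- The tower `Λ_m(H)` building the saturated closure: `Λ_0(H) = H` and
`Λ_{m+1}(H) = Λ_m(H) ∪ {v regular | r(s⁻¹(v)) ⊆ Λ_m(H)}`. -/
def Lam (H : Set V) : ℕ → Set V
  | 0 => H
  | m + 1 => Lam H m ∪ {v : V | G.Regular v ∧ ∀ e : E, G.s e = v → G.r e ∈ Lam H m}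

/-- The saturated closure of `H`: the union of the `Λ_m(H)`. -/
def satClosure (H : Set V) : Set V := ⋃ m : ℕ, G.Lam H m

/-- The tree of a set of vertices: all vertices reachable from it. -/
def Tree (X : Set V) : Set V := {w : V | ∃ v ∈ X, G.Reach v w}

/-- A set of vertices is saturated. -/
def Saturated (H : Set V) : Prop :=
  ∀ v : V, G.Regular v → (∀ e : E, G.s e = v → G.r e ∈ H) → v ∈ H

/-- A cycle based at `v`: a nontrivial closed path whose edges have pairwise
distinct sources. -/
def IsCycle {v : V} (p : G.GPath v v) : Prop :=
  0 < p.length ∧ (p.edges.map G.s).Nodup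

/-- An exit for a path: an edge starting at one of its vertices but not
belonging to the path. -/
def HasExit {u v : V} (p : G.GPath u v) : Prop :=
  ∃ e : E, G.s e ∈ p.edges.map G.s ∧ e ∉ p.edges

/-- An extreme cycle: a cycle with an exit such that every vertex reachable from
the cycle connects back to the cycle. -/
def IsExtreme {v : V} (p : G.GPath v v) : Prop :=
  G.IsCycle p ∧ G.HasExit p ∧
    ∀ w ∈ p.vertices, ∀ x : V, G.Reach w x → ∃ y ∈ p.vertices, G.Reach x y

/-- There is a bifurcation at `w`. -/
def Bifurcation (w : V) : Prop := ∃ e f : E, e ≠ f ∧ G.s e = w ∧ G.s f = w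

/-- `w` lies on a cycle. -/
def OnCycle (w : V) : Prop := ∃ p : G.GPath w w, G.IsCycle p

/-- A line point: no bifurcations and no cycles in its tree. -/
def IsLinePoint (v : V) : Prop :=
  ∀ w : V, G.Reach v w → ¬G.Bifurcation w ∧ ¬G.OnCycle w

/-- The set of line points `P_l`. -/
def Pl : Set V := {v : V | G.IsLinePoint v}

/-- The set `P_c` of vertices lying on cycles without exits. -/
def Pc : Set V :=
  {v : V | ∃ (u : V) (p : G.GPath u u), G.IsCycle p ∧ ¬G.HasExit p ∧ v ∈ p.vertices}

/-- The set `P_ec` of vertices lying on extreme cycles. -/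
def Pec : Set V :=
  {v : V | ∃ (u : V) (p : G.GPath u u), G.IsExtreme p ∧ v ∈ p.vertices}

/-- The relation `∼¹`: `u ∼¹ v` iff `u = v`, or one reaches the other with no
bifurcations in their trees, or both are reachable from a common vertex on a
cycle. -/
def SimOne (u v : V) : Prop :=
  u = v ∨
    ((G.Reach u v ∨ G.Reach v u) ∧
      ∀ w : V, (G.Reach u w ∨ G.Reach v w) → ¬G.Bifurcation w) ∨
    ∃ w : V, G.OnCycle w ∧ G.Reach w u ∧ G.Reach w v

/-- The relation `∼`: the transitive closure of `∼¹`. -/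
def Sim : V → V → Prop := Relation.TransGen G.SimOne

/-- The equivalence class `[u]` of a vertex under `∼`. -/
def classOf (u : V) : Set V := {v : V | G.Sim u v}

/-- The set `F_E(H)` of paths entering `H` minimally: all vertices but the last
one lie outside `H`, and the last one lies in `H`. -/
structure FEnter (G : DGraph V E) (H : Set V) where
  src : V
  tgt : V
  path : G.GPath src tgt
  length_pos : 0 < path.length
  tgt_mem : tgt ∈ H
  not_mem : ∀ w ∈ path.vertices.dropLast, w ∉ H

/-- The quotient graph `_H E` associated to a hereditary set `H`. -/
def quotGraph (H : Set V) (hH : ∀ e : E, G.s e ∈ H → G.r e ∈ H) :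
    DGraph (H ⊕ G.FEnter H) ({e : E // G.s e ∈ H} ⊕ G.FEnter H) where
  s := fun x => match x with
    | .inl e => .inl ⟨G.s e.1, e.2⟩
    | .inr α => .inr α
  r := fun x => match x with
    | .inl e => .inl ⟨G.r e.1, hH e.1 e.2⟩
    | .inr α => .inl ⟨α.tgt, α.tgt_mem⟩

end DGraph

/-- The set `\tilde{c}^0` of vertices lying on extreme cycles connected to the
cycle `c`. -/
def DGraph.tildeVerts {V E : Type} (G : DGraph V E) {v : V} (c : G.GPath v v) : Set V :=
  {w : V | ∃ (u : V) (d : G.GPath u u), G.IsExtreme d ∧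
    (G.Tree {x : V | x ∈ c.vertices} ∩ {x : V | x ∈ d.vertices}).Nonempty ∧
    w ∈ d.vertices}

/-! All vertices of a closed path reach each other, so the tree of the vertex set of a cycle is the
tree of any one of its vertices. If `c` is extreme and `x ∈ T(c⁰)`, then `x` reaches back into `c⁰`,
hence `T(c⁰) = T({x})`. For `x ∈ T(c⁰) ∩ d⁰` this gives `T(c⁰) = T({x}) = T(d⁰)`, and a vertex `z` of
`\tilde{c}⁰ ∩ \tilde{d}⁰` gives `T(c⁰) = T({z}) = T(d⁰)`, i.e. `c ∼ d`. -/

namespace DGraph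

variable {V E : Type} {G : DGraph V E}

def GPath.append : ∀ {u v w : V}, G.GPath u v → G.GPath v w → G.GPath u w
  | _, _, _, .nil _, q => q
  | _, _, _, .cons e p, q => .cons e (p.append q)

lemma Reach.refl (u : V) : G.Reach u u := ⟨.nil u⟩

lemma Reach.trans {u v w : V} (h₁ : G.Reach u v) (h₂ : G.Reach v w) : G.Reach u w :=
  h₁.elim fun p => h₂.elim fun q => ⟨p.append q⟩

lemma Reach.single (e : E) : G.Reach (G.s e) (G.r e) := ⟨.cons e (.nil _)⟩

namespace GPath

lemma start_mem_vertices : ∀ {u v : V} (p : G.GPath u v), u ∈ p.vertices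
  | _, _, .nil _ => List.mem_singleton_self _
  | _, _, .cons _ _ => List.mem_cons_self

lemma reach_of_mem_vertices :
    ∀ {u v : V} (p : G.GPath u v) {x : V}, x ∈ p.vertices → G.Reach u x ∧ G.Reach x v
  | _, _, .nil _, _, hx => by
      rw [List.mem_singleton.mp hx]
      exact ⟨.refl _, .refl _⟩
  | _, _, .cons e p, _, hx => by
      rcases List.mem_cons.mp hx with rfl | hx
      · exact ⟨.refl _, ⟨.cons e p⟩⟩
      · obtain ⟨hux, hxv⟩ := reach_of_mem_vertices p hx
        exact ⟨(Reach.single e).trans hux, hxv⟩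

end GPath

lemma subset_tree (X : Set V) : X ⊆ G.Tree X := fun x hx => ⟨x, hx, .refl x⟩

lemma tree_singleton_subset_tree {X : Set V} {x : V} (hx : x ∈ G.Tree X) :
    G.Tree {x} ⊆ G.Tree X := by
  rintro y ⟨_, rfl, hxy⟩
  obtain ⟨v, hv, hvx⟩ := hx
  exact ⟨v, hv, hvx.trans hxy⟩

lemma tree_vertices_eq_tree_singleton {u : V} (c : G.GPath u u) {x : V} (hx : x ∈ c.vertices) :
    G.Tree {y | y ∈ c.vertices} = G.Tree {x} := by
  refine subset_antisymm ?_ (tree_singleton_subset_tree (subset_tree _ hx))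
  rintro y ⟨v, hv, hvy⟩
  exact ⟨x, rfl, (c.reach_of_mem_vertices hx).2.trans ((c.reach_of_mem_vertices hv).1.trans hvy)⟩

namespace IsExtreme

variable {u : V} {c : G.GPath u u}

lemma tree_eq_tree_singleton (hc : G.IsExtreme c) {x : V}
    (hx : x ∈ G.Tree {y | y ∈ c.vertices}) :
    G.Tree {y | y ∈ c.vertices} = G.Tree {x} := by
  refine subset_antisymm ?_ (tree_singleton_subset_tree hx)
  obtain ⟨v, hv, hvx⟩ := hx
  obtain ⟨y, hy, hxy⟩ := hc.2.2 v hv x hvx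
  rw [tree_vertices_eq_tree_singleton c hy]
  exact tree_singleton_subset_tree ⟨x, rfl, hxy⟩

lemma tree_inter_nonempty_iff (hc : G.IsExtreme c) {w : V} (d : G.GPath w w) :
    (G.Tree {x | x ∈ c.vertices} ∩ {x | x ∈ d.vertices}).Nonempty ↔
      G.Tree {x | x ∈ c.vertices} = G.Tree {x | x ∈ d.vertices} := by
  constructor
  · rintro ⟨x, hxc, hxd⟩
    rw [hc.tree_eq_tree_singleton hxc, tree_vertices_eq_tree_singleton d hxd]
  · intro h
    exact ⟨w, h ▸ subset_tree _ d.start_mem_vertices, d.start_mem_vertices⟩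

lemma tree_eq_of_mem_tildeVerts (hc : G.IsExtreme c) {z : V} (hz : z ∈ G.tildeVerts c) :
    G.Tree {x | x ∈ c.vertices} = G.Tree {z} := by
  obtain ⟨_, d, -, hmeet, hzd⟩ := hz
  rw [(hc.tree_inter_nonempty_iff d).1 hmeet, tree_vertices_eq_tree_singleton d hzd]

end IsExtreme

end DGraph

/-- two extreme cycles are connected iff their trees coincide;
consequently non-equivalent extreme cycles have disjoint `\tilde{c}^0`. -/
theorem extreme_cycles_connected_iff_tree_eq {V E : Type} (G : DGraph V E)
    {u w : V} (c : G.GPath u u) (d : G.GPath w w)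
    (hc : G.IsExtreme c) (hd : G.IsExtreme d) :
    ((G.Tree {x : V | x ∈ c.vertices} ∩ {x : V | x ∈ d.vertices}).Nonempty ↔
      G.Tree {x : V | x ∈ c.vertices} = G.Tree {x : V | x ∈ d.vertices}) ∧
    (¬(G.Tree {x : V | x ∈ c.vertices} ∩ {x : V | x ∈ d.vertices}).Nonempty →
      G.tildeVerts c ∩ G.tildeVerts d = ∅) := by
  have hmeet := hc.tree_inter_nonempty_iff d
  refine ⟨hmeet, fun hne => Set.eq_empty_of_forall_notMem fun z ⟨hzc, hzd⟩ => hne ?_⟩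
  exact hmeet.2 ((hc.tree_eq_of_mem_tildeVerts hzc).trans (hd.tree_eq_of_mem_tildeVerts hzd).symm)
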